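/- For every complex number z with |z| = 1, min( Re(iz), Re((−1/2 − i/2)·z), Re(z) ) ≤ −√(1/10). -/

import Mathlib

/-!
Write `z = x + iy` and `s = √(1/10)`. If all three real parts exceeded `-s`, then
`u = x + s` and `v = s - y` would be positive with `u + v < 4s`. On that open triangle the
convex function `(u - s)² + (v - s)²` stays below its value `10 s² = 1` at the vertices
`(4s, 0)` and `(0, 4s)`, contradicting `x² + y² = 1`.
-/

open Complex

lemma sub_sq_add_sub_sq_lt_of_pos_of_add_lt {u v s : ℝ} (hu : 0 < u) (hv : 0 < v)
    (huv : u + v < 4 * s) : (u - s) ^ 2 + (v - s) ^ 2 < 10 * s ^ 2 := by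
  nlinarith [mul_pos hu hv]

lemma re_neg_half_sub_half_I_mul (z : ℂ) :
    (((-1 : ℂ) / 2 - I / 2) * z).re = -z.re / 2 + z.im / 2 := by
  simp only [mul_re, sub_re, sub_im, div_ofNat_re, div_ofNat_im, neg_re, neg_im, one_re, one_im,
    I_re, I_im]
  ring

/-- for every `z` on the unit circle,
`min(Re(iz), Re((−1/2 − i/2)z), Re z) ≤ −√(1/10)`. -/
theorem stmt_18 (z : ℂ) (hz : ‖z‖ = 1) :
    min (min ((Complex.I * z).re) ((((-1 : ℂ) / 2 - Complex.I / 2) * z).re)) z.re ≤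
      -Real.sqrt (1 / 10) := by
  set s := Real.sqrt (1 / 10)
  by_contra! h
  simp only [lt_min_iff, I_mul_re, re_neg_half_sub_half_I_mul] at h
  obtain ⟨⟨h_im, h_mid⟩, h_re⟩ := h
  have h_unit : z.re ^ 2 + z.im ^ 2 = 1 := by
    have := sq_norm_sub_sq_re z
    rw [hz] at this
    linarith
  have hs : 10 * s ^ 2 = 1 := by
    rw [Real.sq_sqrt (by norm_num)]
    norm_num
  have h_lt := sub_sq_add_sub_sq_lt_of_pos_of_add_lt (u := z.re + s) (v := s - z.im) (s := s)
    (by linarith) (by linarith) (by linarith)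
  linarith
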